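/- Let G be a graph with maximum degree at most 5 and let c be a partial acyclic 5-colouring of G whose colour classes induce forests. If a vertex u of G has all of its coloured neighbours receiving pairwise distinct colours (u is rainbow), then for every colour α ∈ {1,…,5}, assigning (or reassigning) colour α to u yields again a partial acyclic 5-colouring whose colour classes induce forests. -/

import Mathlib

/-!
Recolouring `u` changes only edges at `u`. A colour class, viewed on all of `V`, is the
two-colour graph `bicol G c i i`, so every graph that must stay acyclic has the form
`bicol G c' i j`. There all neighbours of `u` carry the colour paired with that of `u`, so, `u`
being rainbow, it has at most one neighbour. No cycle passes through a vertex of degree at most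
one, hence every cycle of the new graph avoids `u` and was already a cycle of the old one.
-/

/-- The subgraph of `G` consisting of edges with one endpoint coloured `i`
and the other coloured `j`. -/
def bicol {V α : Type*} (G : SimpleGraph V) (c : V → α) (i j : α) : SimpleGraph V where
  Adj u w := G.Adj u w ∧ ((c u = i ∧ c w = j) ∨ (c u = j ∧ c w = i))
  symm := ⟨fun u w h => ⟨h.1.symm, h.2.symm.imp And.symm And.symm⟩⟩
  loopless := ⟨fun u h => G.loopless.irrefl u h.1⟩

/-- A partial acyclic 5-colouring whose colour classes induce forests. -/
def pGood {V : Type*} (G : SimpleGraph V) (c : V → Option (Fin 5)) : Prop :=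
  (∀ i : Fin 5, (G.induce {x | c x = some i}).IsAcyclic) ∧
  (∀ i j : Fin 5, i ≠ j →
    (bicol G c (some i) (some j)).IsAcyclic)

namespace SimpleGraph

variable {V : Type*}

theorem isAcyclic_spanningCoe_iff {s : Set V} {H : SimpleGraph s} :
    H.spanningCoe.IsAcyclic ↔ H.IsAcyclic := by
  refine ⟨IsAcyclic.of_map _, fun hH v p hp => ?_⟩
  have hsupp : ∀ x ∈ p.support, x ∈ s := fun x hx => by
    obtain ⟨e, he, hxe⟩ := (Walk.mem_support_iff_exists_mem_edges_of_not_nil hp.not_nil).1 hx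
    induction e using Sym2.ind with
    | _ a b =>
      obtain ⟨-, a', b', -, rfl, rfl⟩ := p.adj_of_mem_edges he
      rcases Sym2.mem_iff.1 hxe with rfl | rfl <;> simp
  let toH : H.spanningCoe.induce s →g H := ⟨id, fun h => by simpa using h⟩
  have hq : (p.induce s hsupp).IsCycle := by
    rw [← Walk.isCycle_map_iff_of_injective (f := (Embedding.induce (G := H.spanningCoe) s).toHom)
      Subtype.val_injective, Walk.map_induce]
    exact hp
  exact hH _ (hq.map (f := toH) Function.injective_id)

theorem IsAcyclic.of_subsingleton_neighborSet {H H' : SimpleGraph V} {u : V}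
    (hH : H.IsAcyclic) (hle : ∀ x y, H'.Adj x y → x ≠ u → y ≠ u → H.Adj x y)
    (hu : (H'.neighborSet u).Subsingleton) : H'.IsAcyclic := by
  classical
  intro v p hp
  by_cases hup : u ∈ p.support
  · have hq := hp.rotate hup
    exact hq.snd_ne_penultimate <|
      hu ((p.rotate u hup).adj_snd hq.not_nil) ((p.rotate u hup).adj_penultimate hq.not_nil).symm
  · refine hH _ (hp.transfer fun e he => ?_)
    induction e using Sym2.ind with
    | _ x y =>
      exact hle x y (p.adj_of_mem_edges he)
        (fun h => hup (h ▸ p.fst_mem_support_of_mem_edges he))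
        (fun h => hup (h ▸ p.snd_mem_support_of_mem_edges he))

end SimpleGraph

open SimpleGraph

section bicol

variable {V α : Type*} {G : SimpleGraph V}

theorem spanningCoe_induce_eq_bicol (c : V → α) (i : α) :
    (G.induce {x | c x = i}).spanningCoe = bicol G c i i := by
  ext x y
  simp [bicol]

theorem isAcyclic_induce_iff_isAcyclic_bicol (c : V → α) (i : α) :
    (G.induce {x | c x = i}).IsAcyclic ↔ (bicol G c i i).IsAcyclic := by
  rw [← isAcyclic_spanningCoe_iff, spanningCoe_induce_eq_bicol]

theorem bicol_update_adj_iff [DecidableEq V] {c : V → α} {u x y : V} {a i j : α} (hx : x ≠ u)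
    (hy : y ≠ u) : (bicol G (Function.update c u a) i j).Adj x y ↔ (bicol G c i j).Adj x y := by
  simp [bicol, hx, hy]

theorem bicol_adj_color_eq {c : V → α} {u x y : V} {i j : α} (hx : (bicol G c i j).Adj u x)
    (hy : (bicol G c i j).Adj u y) : c x = c y := by
  obtain ⟨-, hx⟩ := hx
  obtain ⟨-, hy⟩ := hy
  grind

theorem subsingleton_neighborSet_bicol_update [DecidableEq V] {c : V → Option α} {u : V}
    (hrb : ∀ u₁ u₂ : V, G.Adj u u₁ → G.Adj u u₂ → (c u₁).isSome → c u₁ = c u₂ → u₁ = u₂)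
    (a : Option α) (i j : α) :
    ((bicol G (Function.update c u a) (some i) (some j)).neighborSet u).Subsingleton := by
  intro x hx y hy
  have hxu : x ≠ u := hx.1.ne.symm
  have hcx : c x = some i ∨ c x = some j := by
    have := hx.2
    rw [Function.update_of_ne hxu] at this
    tauto
  refine hrb x y hx.1 hy.1 (by rcases hcx with h | h <;> simp [h]) ?_
  simpa [hxu, hy.1.ne.symm] using bicol_adj_color_eq hx hy

theorem isAcyclic_bicol_update [DecidableEq V] {c : V → Option α} {u : V}
    (hrb : ∀ u₁ u₂ : V, G.Adj u u₁ → G.Adj u u₂ → (c u₁).isSome → c u₁ = c u₂ → u₁ = u₂)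
    (a : Option α) {i j : α} (h : (bicol G c (some i) (some j)).IsAcyclic) :
    (bicol G (Function.update c u a) (some i) (some j)).IsAcyclic :=
  h.of_subsingleton_neighborSet (fun _ _ hxy hx hy => (bicol_update_adj_iff hx hy).1 hxy)
    (subsingleton_neighborSet_bicol_update hrb a i j)

end bicol

theorem stmt5_general {V : Type*} [DecidableEq V] (G : SimpleGraph V)
    (c : V → Option (Fin 5)) (hc : pGood G c) (u : V)
    (hrb : ∀ u₁ u₂ : V, G.Adj u u₁ → G.Adj u u₂ → (c u₁).isSome →
      c u₁ = c u₂ → u₁ = u₂)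
    (α : Fin 5) :
    pGood G (Function.update c u (some α)) := by
  refine ⟨fun i => ?_, fun i j hij => isAcyclic_bicol_update hrb _ (hc.2 i j hij)⟩
  rw [isAcyclic_induce_iff_isAcyclic_bicol]
  exact isAcyclic_bicol_update hrb _ ((isAcyclic_induce_iff_isAcyclic_bicol _ _).1 (hc.1 i))

/-- A rainbow vertex may be coloured or recoloured with any of the 5 colours. -/
theorem stmt5 {V : Type*} [DecidableEq V] (G : SimpleGraph V)
    (hΔ : ∀ w : V, (G.neighborSet w).ncard ≤ 5)
    (c : V → Option (Fin 5)) (hc : pGood G c) (u : V)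
    (hrb : ∀ u₁ u₂ : V, G.Adj u u₁ → G.Adj u u₂ → (c u₁).isSome →
      c u₁ = c u₂ → u₁ = u₂)
    (α : Fin 5) :
    pGood G (Function.update c u (some α)) :=
  stmt5_general G c hc u hrb α
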